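/- arXiv:2408.08738 — 4 statements merged into one kernel-verified Lean document; each statement's English description precedes it below -/
import Mathlib

section
/- Fix integers S > 1, M ∈ {1,...,S-1}, D ≥ 1, and a nonzero vector δ ∈ {-1,0,1}^D. For a δ-anchor (λ̄, μ̄), define the δ-line emanating from it as L(λ̄,μ̄,δ) = {(λ,μ) ∈ B^≥_{S,M} : ∃ integer ι ≥ 0 with (λ,μ) = (λ̄,μ̄) + ι(δ,δ)}. Then every element of B^≥_{S,M} lies in the δ-line emanating from some δ-anchor; i.e., the δ-lines emanating from δ-anchors cover B^≥_{S,M}. -/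
/-- Membership in `B^≥_{S,M}`: multi-indices in `{1,...,S}^D` (as integers), `lam ≤ mu`
componentwise, and every coordinate gap is at least `M`. -/
def memBge (S M D : ℕ) (lam mu : Fin D → ℤ) : Prop :=
  (∀ d, 1 ≤ lam d ∧ lam d ≤ S) ∧ (∀ d, 1 ≤ mu d ∧ mu d ≤ S) ∧
  (∀ d, lam d ≤ mu d) ∧ (∀ d, (M : ℤ) ≤ mu d - lam d)

/-- A `δ`-anchor of `B^≥_{S,M}`. -/
def isAnchor (S M D : ℕ) (δ lam mu : Fin D → ℤ) : Prop :=
  memBge S M D lam mu ∧ ∃ d, (δ d = 1 ∧ lam d = 1) ∨ (δ d = -1 ∧ mu d = S)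

/-- Every element of `B^≥_{S,M}` lies on the `δ`-line emanating from some `δ`-anchor. -/
theorem stmt5 (S M D : ℕ) (hS : 1 < S) (hM1 : 1 ≤ M) (hMS : M ≤ S - 1) (hD : 1 ≤ D)
    (δ : Fin D → ℤ) (hδmem : ∀ d, δ d = -1 ∨ δ d = 0 ∨ δ d = 1) (hδ0 : δ ≠ 0)
    (lam mu : Fin D → ℤ) (hmem : memBge S M D lam mu) :
    ∃ lam' mu' : Fin D → ℤ, isAnchor S M D δ lam' mu' ∧
      ∃ ι : ℕ, (∀ d, lam d = lam' d + ι * δ d) ∧ (∀ d, mu d = mu' d + ι * δ d) := by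
  classical
  obtain ⟨h1, h2, h3, h4⟩ := hmem
  set T : Finset (Fin D) := Finset.univ.filter (fun d => δ d ≠ 0) with hT
  have hne : T.Nonempty := by
    obtain ⟨d, hd⟩ := Function.ne_iff.mp hδ0
    exact ⟨d, by simp only [hT, Finset.mem_filter, Finset.mem_univ, true_and]; simpa using hd⟩
  set g : Fin D → ℕ := fun d => if δ d = 1 then (lam d - 1).toNat else ((S : ℤ) - mu d).toNat
    with hg
  set ι := T.inf' hne g with hι
  obtain ⟨d₀, hd₀T, hd₀⟩ := T.exists_mem_eq_inf' hne g
  have hd₀ne : δ d₀ ≠ 0 := by simpa [hT] using hd₀T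
  have key1 : ∀ d, δ d = 1 → (ι : ℤ) ≤ lam d - 1 := by
    intro d hd
    have hle : ι ≤ g d := Finset.inf'_le g (by simp [hT, hd])
    have h0 : (0 : ℤ) ≤ lam d - 1 := by linarith [(h1 d).1]
    have hgd : g d = (lam d - 1).toNat := if_pos hd
    calc (ι : ℤ) ≤ (g d : ℤ) := by exact_mod_cast hle
      _ = ((lam d - 1).toNat : ℤ) := by rw [hgd]
      _ = lam d - 1 := Int.toNat_of_nonneg h0
  have key2 : ∀ d, δ d = -1 → (ι : ℤ) ≤ (S : ℤ) - mu d := by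
    intro d hd
    have hle : ι ≤ g d := Finset.inf'_le g (by simp [hT, hd])
    have h0 : (0 : ℤ) ≤ (S : ℤ) - mu d := by linarith [(h2 d).2]
    have hne1 : δ d ≠ 1 := by rw [hd]; decide
    have hgd : g d = ((S : ℤ) - mu d).toNat := if_neg hne1
    calc (ι : ℤ) ≤ (g d : ℤ) := by exact_mod_cast hle
      _ = (((S : ℤ) - mu d).toNat : ℤ) := by rw [hgd]
      _ = (S : ℤ) - mu d := Int.toNat_of_nonneg h0
  refine ⟨fun d => lam d - ι * δ d, fun d => mu d - ι * δ d, ⟨⟨?_, ?_, ?_, ?_⟩, ?_⟩,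
    ι, fun d => by ring, fun d => by ring⟩
  · intro d
    rcases hδmem d with hd | hd | hd <;>
      simp only [hd] <;>
      [skip; skip; skip] <;>
      constructor
    · nlinarith [(h1 d).1]
    · nlinarith [(h1 d).2, key2 d hd, h3 d]
    · nlinarith [(h1 d).1]
    · nlinarith [(h1 d).2]
    · nlinarith [key1 d hd]
    · nlinarith [(h1 d).2]
  · intro d
    rcases hδmem d with hd | hd | hd <;> simp only [hd] <;> constructor
    · nlinarith [(h2 d).1]
    · nlinarith [key2 d hd]
    · nlinarith [(h2 d).1]
    · nlinarith [(h2 d).2]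
    · nlinarith [key1 d hd, h3 d, (h2 d).1]
    · nlinarith [(h2 d).2]
  · intro d
    show lam d - ι * δ d ≤ mu d - ι * δ d
    linarith [h3 d]
  · intro d
    show (M : ℤ) ≤ (mu d - ι * δ d) - (lam d - ι * δ d)
    linarith [h4 d]
  · refine ⟨d₀, ?_⟩
    rcases hδmem d₀ with hd | hd | hd
    · right
      refine ⟨hd, ?_⟩
      have h0 : (0 : ℤ) ≤ (S : ℤ) - mu d₀ := by linarith [(h2 d₀).2]
      have hne1 : δ d₀ ≠ 1 := by rw [hd]; decide
      have hgι : (ι : ℤ) = (S : ℤ) - mu d₀ := by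
        have : ι = g d₀ := hd₀
        rw [this, show g d₀ = ((S : ℤ) - mu d₀).toNat from if_neg hne1,
          Int.toNat_of_nonneg h0]
      show mu d₀ - ι * δ d₀ = S
      rw [hd]; linarith [hgι]
    · exact absurd hd hd₀ne
    · left
      refine ⟨hd, ?_⟩
      have h0 : (0 : ℤ) ≤ lam d₀ - 1 := by linarith [(h1 d₀).1]
      have hgι : (ι : ℤ) = lam d₀ - 1 := by
        have : ι = g d₀ := hd₀
        rw [this, show g d₀ = (lam d₀ - 1).toNat from if_pos hd,
          Int.toNat_of_nonneg h0]
      show lam d₀ - ι * δ d₀ = 1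
      rw [hd]; linarith [hgι]
end

section
/- Fix integers S > 1, M ∈ {1,...,S-1}, D ≥ 1, and a nonzero δ ∈ {-1,0,1}^D. For a pair (λ,μ) ∈ {1,...,S}^D × {1,...,S}^D with λ ≤ μ, define the δ-face Face(λ,μ,δ) as the set of multi-indices σ ∈ ℤ^D with σ_d = λ_d when δ_d = -1, σ_d = μ_d when δ_d = 1, and σ_d ∈ {λ_d+1,...,μ_d-1} when δ_d = 0. Suppose (λ,μ) and (λ',μ') both lie in B^≥_{S,M} (i.e., min_d(μ_d - λ_d) ≥ M and similarly for primes) and there is an integer ι ∈ {1,...,M-1} with (λ',μ') = (λ,μ) + ι(δ,δ). Then Face(λ,μ,δ) ⊆ Face(λ',μ',0). -/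
/-- The `δ`-face of the hyperrectangle with corners `lam ≤ mu`. -/
def face (D : ℕ) (lam mu δ : Fin D → ℤ) : Set (Fin D → ℤ) :=
  {σ | ∀ d, (δ d = -1 → σ d = lam d) ∧ (δ d = 1 → σ d = mu d) ∧
            (δ d = 0 → lam d + 1 ≤ σ d ∧ σ d ≤ mu d - 1)}

/-- If `(lam', mu') = (lam, mu) + ι (δ, δ)` with `1 ≤ ι ≤ M - 1` and both buckets lie in
`B^≥_{S,M}`, then the `δ`-face of the first is contained in the interior face of the second. -/
theorem stmt6 (S M D : ℕ) (hS : 1 < S) (hM1 : 1 ≤ M) (hMS : M ≤ S - 1) (hD : 1 ≤ D)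
    (δ : Fin D → ℤ) (hδmem : ∀ d, δ d = -1 ∨ δ d = 0 ∨ δ d = 1) (hδ0 : δ ≠ 0)
    (lam mu lam' mu' : Fin D → ℤ)
    (h1 : ∀ d, 1 ≤ lam d ∧ lam d ≤ S) (h2 : ∀ d, 1 ≤ mu d ∧ mu d ≤ S)
    (h3 : ∀ d, lam d ≤ mu d) (h4 : ∀ d, (M : ℤ) ≤ mu d - lam d)
    (h1' : ∀ d, 1 ≤ lam' d ∧ lam' d ≤ S) (h2' : ∀ d, 1 ≤ mu' d ∧ mu' d ≤ S)
    (h3' : ∀ d, lam' d ≤ mu' d) (h4' : ∀ d, (M : ℤ) ≤ mu' d - lam' d)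
    (ι : ℕ) (hι1 : 1 ≤ ι) (hι2 : ι ≤ M - 1)
    (hshift : (∀ d, lam' d = lam d + ι * δ d) ∧ (∀ d, mu' d = mu d + ι * δ d)) :
    face D lam mu δ ⊆ face D lam' mu' 0 := by
  intro σ hσ d
  obtain ⟨hl, hm⟩ := hshift
  have hιM : (ι : ℤ) ≤ (M : ℤ) - 1 := by
    have := (Nat.le_sub_one_iff_lt (Nat.lt_of_lt_of_le Nat.zero_lt_one hM1)).mp hι2
    omega
  have hι1' : (1 : ℤ) ≤ ι := by exact_mod_cast hι1
  have hσd := hσ d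
  refine ⟨by simp, by simp, fun _ => ?_⟩
  rw [hl d, hm d]
  rcases hδmem d with h | h | h
  · have := hσd.1 h
    have := h4 d
    rw [h]; constructor <;> [omega; omega]
  · have := hσd.2.2 h
    rw [h]; constructor <;> [omega; omega]
  · have := hσd.2.1 h
    have := h4 d
    rw [h]; constructor <;> [omega; omega]
end

section
/- Let P ⊆ [0,1] be nonempty and closed, let K > 0 be an integer, and let p_1,...,p_K ∈ P be such that every p ∈ P satisfies 0 ≤ p - p_k ≤ 1/K for some k. For a measurable pricing policy π : [0,1]^D → P, define for ℓ ≤ u in [0,1]^D and v ∈ [0,1] the revenue R^π(ℓ,u,v) = 𝟙{ inf_{x ∈ [ℓ,u]} π(x) ≤ v } · inf_{x ∈ [ℓ,u]} π(x). Then there exists a policy π' : [0,1]^D → {p_1,...,p_K} such that R^{π'}(ℓ,u,v) ≥ R^π(ℓ,u,v) - 1/K for all (ℓ,u,v) with ℓ ≤ u and v ∈ [0,1]. -/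
/-- The seller's revenue from a strategic buyer `(ℓ, u, v)` under pricing policy `π`:
`𝟙{ inf_{x ∈ [ℓ,u]} π(x) ≤ v } · inf_{x ∈ [ℓ,u]} π(x)`. -/
noncomputable def Rev (D : ℕ) (π : (Fin D → ℝ) → ℝ) (ℓ u : Fin D → ℝ) (v : ℝ) : ℝ :=
  if sInf (π '' Set.Icc ℓ u) ≤ v then sInf (π '' Set.Icc ℓ u) else 0

/-- Rounding a policy down to a `1/K`-grid of prices loses at most `1/K` of revenue,
pointwise over all buyer realizations. -/
theorem stmt11 (D K : ℕ) (hK : 0 < K) (P : Set ℝ) (hsub : P ⊆ Set.Icc 0 1)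
    (hne : P.Nonempty) (hcl : IsClosed P)
    (p : Fin K → ℝ) (hp : ∀ k, p k ∈ P)
    (happrox : ∀ q ∈ P, ∃ k : Fin K, 0 ≤ q - p k ∧ q - p k ≤ 1 / K)
    (π : (Fin D → ℝ) → ℝ) (hπ : ∀ x, π x ∈ P) (hmeas : Measurable π) :
    ∃ π' : (Fin D → ℝ) → ℝ, (∀ x, ∃ k : Fin K, π' x = p k) ∧
      ∀ ℓ u : Fin D → ℝ, ∀ v : ℝ, ℓ ∈ Set.Icc 0 1 → u ∈ Set.Icc 0 1 → ℓ ≤ u →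
        v ∈ Set.Icc (0:ℝ) 1 →
        Rev D π' ℓ u v ≥ Rev D π ℓ u v - 1 / K := by
  choose k hk1 hk2 using fun x => happrox (π x) (hπ x)
  refine ⟨fun x => p (k x), fun x => ⟨k x, rfl⟩, ?_⟩
  intro ℓ u v hℓ hu hlu hv
  have hKpos : (0:ℝ) < 1 / K := by positivity
  have hbox : (Set.Icc ℓ u).Nonempty := Set.nonempty_Icc.2 hlu
  set S := π '' Set.Icc ℓ u with hS
  set S' := (fun x => p (k x)) '' Set.Icc ℓ u with hS'
  have hSne : S.Nonempty := hbox.image _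
  have hS'ne : S'.Nonempty := hbox.image _
  have hSbd : BddBelow S := ⟨0, by rintro a ⟨x, _, rfl⟩; exact (hsub (hπ x)).1⟩
  have hS'bd : BddBelow S' := ⟨0, by rintro a ⟨x, _, rfl⟩; exact (hsub (hp (k x))).1⟩
  have h1 : sInf S' ≤ sInf S := by
    apply le_csInf hSne
    rintro a ⟨x, hx, rfl⟩
    exact le_trans (csInf_le hS'bd ⟨x, hx, rfl⟩) (by linarith [hk1 x])
  have h2 : sInf S ≤ sInf S' + 1 / K := by
    have : sInf S - 1 / K ≤ sInf S' := by
      apply le_csInf hS'ne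
      rintro a ⟨x, hx, rfl⟩
      have := csInf_le hSbd ⟨x, hx, rfl⟩
      linarith [hk2 x]
    linarith
  have h0' : 0 ≤ sInf S' := le_csInf hS'ne (by rintro a ⟨x, _, rfl⟩; exact (hsub (hp (k x))).1)
  simp only [Rev, ← hS, ← hS']
  by_cases h : sInf S ≤ v
  · rw [if_pos h, if_pos (le_trans h1 h)]
    linarith
  · rw [if_neg h]
    by_cases h' : sInf S' ≤ v
    · rw [if_pos h']; linarith
    · rw [if_neg h']; linarith
end

section
/- Fix a finite price set P = {p_1,...,p_K} with 0 < p_1 < ... < p_K ≤ 1, a nonzero δ ∈ {-1,0,1}^D, integers S > 1 and M ∈ {1,...,S-1}, and a measurable policy π : [0,1]^D → P. For each bucket (λ,μ) in B^≥_{S,M}, write m(λ,μ,δ') = min over σ ∈ Face(λ,μ,δ') of min over x ∈ H_S(σ) of π(x). Let A = {(λ,μ) ∈ B^≥_{S,M} : m(λ,μ,0) > m(λ,μ,δ)}. Then |A| ≤ 2·D·K·S^{2D}/M. -/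
/-- The grid cell of width `1/S` with (1-based) index `k`: half-open except the last one. -/
noncomputable def gridCellZ (S : ℕ) (k : ℤ) : Set ℝ :=
  if k = (S : ℤ) then Set.Icc (((k : ℝ) - 1) / S) ((k : ℝ) / S)
  else Set.Ico (((k : ℝ) - 1) / S) ((k : ℝ) / S)

/-- The hypercube grid cell of `[0,1]^D` with multi-index `σ`. -/
noncomputable def gridCubeZ (S D : ℕ) (σ : Fin D → ℤ) : Set (Fin D → ℝ) :=
  {x | ∀ d, x d ∈ gridCellZ S (σ d)}

/-- The minimal price offered by `π` on the `δ'`-face of the bucket `(lam, mu)`. -/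
noncomputable def faceMin (S D : ℕ) (π : (Fin D → ℝ) → ℝ) (lam mu δ' : Fin D → ℤ) : ℝ :=
  sInf (π '' ⋃ σ ∈ face D lam mu δ', gridCubeZ S D σ)

/-!
Shifting a bucket `(λ, μ)` by `s ∈ [1, M - 1]` steps along `δ` moves its interior face onto a
superset of the old `δ`-face (this needs the side lengths `μ - λ ≥ M`), so the interior minimum of
the shifted bucket is at most the `δ`-face minimum of the old one. Hence two buckets of `A` on the
same `δ`-line, fewer than `M` steps apart, have different interior minima. Indexing each bucket of
`A` by the exit point of its `δ`-line from the box, its interior minimum (one of `K` prices) and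
the block of `M` consecutive steps containing its position on the line is therefore injective;
there are at most `D S^{2D-1}` exit points and `⌊S/M⌋ + 1 ≤ 2S/M` blocks.
-/

open Finset

theorem Nat.div_add_one_mul_le_two_mul {a b : ℕ} (h : b ≤ a) : (a / b + 1) * b ≤ 2 * a := by
  have := Nat.div_mul_le_self a b
  rw [add_one_mul]
  omega

theorem Set.ncard_le_of_separated {α β γ : Type*} {A : Set α} (a : α → γ) (f : α → β)
    (t : α → ℕ) {N : Finset γ} {V : Finset β} {L M : ℕ} (hM : 0 < M)
    (ha : ∀ q ∈ A, a q ∈ N) (hf : ∀ q ∈ A, f q ∈ V) (ht : ∀ q ∈ A, t q ≤ L)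
    (hsep : ∀ q ∈ A, ∀ q' ∈ A, a q = a q' → f q = f q' → t q ≤ t q' → t q' < t q + M →
      q = q') :
    A.ncard ≤ #N * #V * (L / M + 1) := by
  have hmaps : ∀ q ∈ A, (a q, f q, t q / M) ∈ (N ×ˢ V ×ˢ Finset.range (L / M + 1) : Finset _) :=
    fun q hq => by
      simpa [ha q hq, hf q hq, Nat.lt_succ_iff] using Nat.div_le_div_right (c := M) (ht q hq)
  have hinj : A.InjOn fun q => (a q, f q, t q / M) := by
    have key : ∀ q ∈ A, ∀ q' ∈ A, (a q, f q, t q / M) = (a q', f q', t q' / M) →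
        t q ≤ t q' → q = q' := by
      intro q hq q' hq' heq hle
      simp only [Prod.mk.injEq] at heq
      obtain ⟨haq, hfq, hblock⟩ := heq
      refine hsep q hq q' hq' haq hfq hle ?_
      calc t q' < t q' / M * M + M := Nat.lt_div_mul_add hM
        _ = t q / M * M + M := by rw [hblock]
        _ ≤ t q + M := Nat.add_le_add_right (Nat.div_mul_le_self _ _) _
    intro q hq q' hq' heq
    rcases le_total (t q) (t q') with hle | hle
    · exact key q hq q' hq' heq hle
    · exact (key q' hq' q hq heq.symm hle).symm
  calc A.ncard ≤ ((N ×ˢ V ×ˢ Finset.range (L / M + 1) : Finset _) : Set _).ncard :=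
        Set.ncard_le_ncard_of_injOn _ hmaps hinj
    _ = #N * #V * (L / M + 1) := by
        rw [Set.ncard_coe_finset, card_product, card_product, card_range, mul_assoc]

section Face

variable {D : ℕ}

theorem face_nonempty {lam mu : Fin D → ℤ} (δ : Fin D → ℤ) (hgap : ∀ d, 2 ≤ mu d - lam d) :
    (face D lam mu δ).Nonempty :=
  ⟨fun d => if δ d = 1 then mu d else if δ d = -1 then lam d else lam d + 1, fun d => by
    have := hgap d
    dsimp only
    split_ifs <;> omega⟩

theorem face_subset_face_zero_add_smul {δ : Fin D → ℤ}
    (hδ : ∀ d, δ d = -1 ∨ δ d = 0 ∨ δ d = 1) {lam mu : Fin D → ℤ} {s : ℤ} (hs : 1 ≤ s)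
    (hgap : ∀ d, s + 1 ≤ mu d - lam d) :
    face D lam mu δ ⊆ face D (lam + s • δ) (mu + s • δ) 0 := by
  intro σ hσ d
  obtain ⟨hlo, hhi, hmid⟩ := hσ d
  have := hgap d
  refine ⟨fun h => by simp at h, fun h => by simp at h, fun _ => ?_⟩
  simp only [Pi.add_apply, Pi.smul_apply, smul_eq_mul]
  rcases hδ d with h | h | h
  · have := hlo h; rw [h]; omega
  · have := hmid h; rw [h]; omega
  · have := hhi h; rw [h]; omega

end Face

theorem left_mem_gridCellZ {S : ℕ} (hS : 0 < S) (k : ℤ) :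
    ((k : ℝ) - 1) / S ∈ gridCellZ S k := by
  have hlt : ((k : ℝ) - 1) / S < k / S := by gcongr; linarith
  unfold gridCellZ
  split_ifs
  exacts [⟨le_rfl, hlt.le⟩, ⟨le_rfl, hlt⟩]

section FaceMin

variable {S D : ℕ} {π : (Fin D → ℝ) → ℝ} {lam mu δ : Fin D → ℤ}

theorem biUnion_gridCubeZ_nonempty (hS : 0 < S) (hne : (face D lam mu δ).Nonempty) :
    (⋃ σ ∈ face D lam mu δ, gridCubeZ S D σ).Nonempty := by
  obtain ⟨σ, hσ⟩ := hne
  exact ⟨_, Set.mem_biUnion hσ fun d => left_mem_gridCellZ hS (σ d)⟩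

theorem faceMin_le_faceMin (hS : 0 < S) (hπ : BddBelow (Set.range π))
    {lam' mu' δ' : Fin D → ℤ} (hsub : face D lam mu δ ⊆ face D lam' mu' δ')
    (hne : (face D lam mu δ).Nonempty) :
    faceMin S D π lam' mu' δ' ≤ faceMin S D π lam mu δ :=
  csInf_le_csInf (hπ.mono (Set.image_subset_range _ _))
    ((biUnion_gridCubeZ_nonempty hS hne).image π)
    (Set.image_mono (Set.biUnion_subset_biUnion_left hsub))

theorem faceMin_mem_range (hS : 0 < S) (hπ : (Set.range π).Finite)
    (hne : (face D lam mu δ).Nonempty) : faceMin S D π lam mu δ ∈ Set.range π :=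
  Set.image_subset_range _ _ <| ((biUnion_gridCubeZ_nonempty hS hne).image π).csInf_mem
    (hπ.subset (Set.image_subset_range _ _))

theorem face_nonempty_of_faceMin_lt (hπ : ∀ x, 0 ≤ π x) {lam' mu' δ' : Fin D → ℤ}
    (h : faceMin S D π lam' mu' δ' < faceMin S D π lam mu δ) : (face D lam mu δ).Nonempty := by
  by_contra hne
  rw [Set.not_nonempty_iff_eq_empty] at hne
  have hzero : faceMin S D π lam mu δ = 0 := by simp [faceMin, hne]
  exact h.not_ge (hzero ▸ Real.sInf_nonneg (by rintro _ ⟨x, -, rfl⟩; exact hπ x))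

theorem faceMin_zero_add_smul_lt (hS : 0 < S) (hπ : ∀ x, 0 ≤ π x)
    (hδ : ∀ d, δ d = -1 ∨ δ d = 0 ∨ δ d = 1) {s : ℤ} (hs : 1 ≤ s)
    (hgap : ∀ d, s + 1 ≤ mu d - lam d)
    (hbad : faceMin S D π lam mu δ < faceMin S D π lam mu 0) :
    faceMin S D π (lam + s • δ) (mu + s • δ) 0 < faceMin S D π lam mu 0 :=
  (faceMin_le_faceMin hS ⟨0, by rintro _ ⟨x, rfl⟩; exact hπ x⟩
    (face_subset_face_zero_add_smul hδ hs hgap)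
    (face_nonempty δ fun d => by linarith [hgap d])).trans_lt hbad

end FaceMin

section Box

variable {ι : Type*} [Fintype ι] [DecidableEq ι] {S : ℕ}

noncomputable def indexBox (S : ℕ) : Finset (ι → ℤ) :=
  Fintype.piFinset fun _ => Icc 1 (S : ℤ)

noncomputable def indexSlab (S : ℕ) (d : ι) (c : ℤ) : Finset (ι → ℤ) :=
  Fintype.piFinset fun e => if e = d then {c} else Icc 1 (S : ℤ)

theorem card_indexBox : #(indexBox S : Finset (ι → ℤ)) = S ^ Fintype.card ι := by
  simp [indexBox, Fintype.card_piFinset]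

theorem card_indexSlab (d : ι) (c : ℤ) : #(indexSlab S d c) = S ^ (Fintype.card ι - 1) := by
  simp [indexSlab, Fintype.card_piFinset, apply_ite Finset.card, Finset.prod_ite,
    Finset.filter_ne', Finset.card_erase_of_mem]

theorem mem_indexSlab {f : ι → ℤ} {d : ι} {c : ℤ} (hf : f ∈ indexBox S) (hd : f d = c) :
    f ∈ indexSlab S d c := by
  simp only [indexBox, indexSlab, Fintype.mem_piFinset] at hf ⊢
  intro e
  split_ifs with h
  · simp [h, hd]
  · exact hf e

noncomputable def exitBoundary (S : ℕ) (δ : ι → ℤ) : Finset ((ι → ℤ) × (ι → ℤ)) :=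
  (univ.filter fun d => δ d ≠ 0).biUnion fun d =>
    if δ d = 1 then indexBox S ×ˢ indexSlab S d S else indexSlab S d 1 ×ˢ indexBox S

theorem card_exitBoundary_le (δ : ι → ℤ) :
    #(exitBoundary S δ) ≤ Fintype.card ι * S ^ (2 * Fintype.card ι - 1) := by
  have hpiece : ∀ d, #(if δ d = 1 then indexBox S ×ˢ indexSlab S d S
      else indexSlab S d 1 ×ˢ indexBox S) = S ^ (2 * Fintype.card ι - 1) := by
    intro d
    have : Fintype.card ι + (Fintype.card ι - 1) = 2 * Fintype.card ι - 1 := by omega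
    split_ifs <;> simp [card_product, card_indexBox, card_indexSlab, ← pow_add, this,
      add_comm (Fintype.card ι - 1)]
  calc #(exitBoundary S δ) ≤ ∑ _d ∈ univ.filter fun d => δ d ≠ 0, S ^ (2 * Fintype.card ι - 1) :=
        card_biUnion_le.trans (sum_le_sum fun d _ => (hpiece d).le)
    _ ≤ Fintype.card ι * S ^ (2 * Fintype.card ι - 1) := by
        rw [sum_const, smul_eq_mul]
        exact Nat.mul_le_mul_right _ (card_filter_le _ _)

end Box

section ExitTime

variable {ι : Type*} {S : ℕ} {δ : ι → ℤ} {q : (ι → ℤ) × (ι → ℤ)}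

/-- Coordinates with `δ d ∉ {1, -1}` never leave `[1, S]`; the value `S` exceeds every genuine
exit time, so the infimum is attained at a coordinate that moves. -/
noncomputable def exitTime (S : ℕ) (δ : ι → ℤ) (q : (ι → ℤ) × (ι → ℤ)) : ℕ :=
  ⨅ d, if δ d = 1 then (S - q.2 d).toNat else if δ d = -1 then (q.1 d - 1).toNat else S

noncomputable def deltaAnchor (S : ℕ) (δ : ι → ℤ) (q : (ι → ℤ) × (ι → ℤ)) : (ι → ℤ) × (ι → ℤ) :=
  q + (exitTime S δ q : ℤ) • (δ, δ)

theorem exitTime_le (d : ι) :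
    exitTime S δ q ≤ if δ d = 1 then (S - q.2 d).toNat else if δ d = -1 then (q.1 d - 1).toNat
      else S :=
  ciInf_le (OrderBot.bddBelow _) d

theorem exitTime_lt {d₀ : ι} (hd₀ : δ d₀ = -1 ∨ δ d₀ = 0 ∨ δ d₀ = 1) (hδd₀ : δ d₀ ≠ 0)
    (h₁ : ∀ d, 1 ≤ q.1 d ∧ q.1 d ≤ S) (h₂ : ∀ d, 1 ≤ q.2 d ∧ q.2 d ≤ S) :
    exitTime S δ q < S := by
  have hroom := exitTime_le (S := S) (δ := δ) (q := q) d₀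
  have := h₁ d₀
  have := h₂ d₀
  split_ifs at hroom <;> omega

theorem deltaAnchor_mem_exitBoundary [Fintype ι] [DecidableEq ι]
    (hδ : ∀ d, δ d = -1 ∨ δ d = 0 ∨ δ d = 1) (hδ0 : δ ≠ 0)
    (h₁ : ∀ d, 1 ≤ q.1 d ∧ q.1 d ≤ S) (h₂ : ∀ d, 1 ≤ q.2 d ∧ q.2 d ≤ S)
    (hle : ∀ d, q.1 d ≤ q.2 d) :
    deltaAnchor S δ q ∈ exitBoundary S δ := by
  obtain ⟨d₀, hd₀⟩ : ∃ d, δ d ≠ 0 := Function.ne_iff.mp hδ0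
  have hlt := exitTime_lt (hδ d₀) hd₀ h₁ h₂
  have : Nonempty ι := ⟨d₀⟩
  obtain ⟨d, hd⟩ := exists_eq_ciInf_of_finite (f := fun d =>
    if δ d = 1 then (S - q.2 d).toNat else if δ d = -1 then (q.1 d - 1).toNat else S)
  change _ = exitTime S δ q at hd
  have hfst : ∀ e, (deltaAnchor S δ q).1 e = q.1 e + exitTime S δ q * δ e := fun e => rfl
  have hsnd : ∀ e, (deltaAnchor S δ q).2 e = q.2 e + exitTime S δ q * δ e := fun e => rfl
  have hbox : (deltaAnchor S δ q).1 ∈ indexBox S ∧ (deltaAnchor S δ q).2 ∈ indexBox S := by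
    simp only [indexBox, Fintype.mem_piFinset, mem_Icc, hfst, hsnd]
    refine ⟨fun e => ?_, fun e => ?_⟩ <;>
    · have hroom := exitTime_le (S := S) (δ := δ) (q := q) e
      have := h₁ e
      have := h₂ e
      have := hle e
      rcases hδ e with h | h | h <;> rw [h] <;> split_ifs at hroom <;> omega
  simp only [exitBoundary, mem_biUnion, mem_filter, mem_univ, true_and]
  have := h₁ d
  have := h₂ d
  split_ifs at hd with h h'
  · refine ⟨d, by omega, ?_⟩
    rw [if_pos h, mem_product]
    exact ⟨hbox.1, mem_indexSlab hbox.2 (by rw [hsnd, h]; omega)⟩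
  · refine ⟨d, by omega, ?_⟩
    rw [if_neg h, mem_product]
    exact ⟨mem_indexSlab hbox.1 (by rw [hfst, h']; omega), hbox.2⟩
  · omega

end ExitTime

theorem eq_of_deltaAnchor_eq {S M D : ℕ} {π : (Fin D → ℝ) → ℝ} {δ : Fin D → ℤ} (hS : 0 < S)
    (hπ : ∀ x, 0 ≤ π x) (hδ : ∀ d, δ d = -1 ∨ δ d = 0 ∨ δ d = 1)
    {q q' : (Fin D → ℤ) × (Fin D → ℤ)} (hgap : ∀ d, (M : ℤ) ≤ q'.2 d - q'.1 d)
    (hbad : faceMin S D π q'.1 q'.2 δ < faceMin S D π q'.1 q'.2 0)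
    (ha : deltaAnchor S δ q = deltaAnchor S δ q')
    (hf : faceMin S D π q.1 q.2 0 = faceMin S D π q'.1 q'.2 0)
    (ht : exitTime S δ q ≤ exitTime S δ q') (htM : exitTime S δ q' < exitTime S δ q + M) :
    q = q' := by
  obtain ⟨n, hn⟩ := Nat.exists_eq_add_of_le ht
  have hq : q = q' + (n : ℤ) • (δ, δ) := by
    unfold deltaAnchor at ha
    rw [hn, Nat.cast_add, add_smul, ← add_assoc, add_right_comm] at ha
    exact add_right_cancel ha
  rcases Nat.eq_zero_or_pos n with rfl | hn0
  · rw [hq, Nat.cast_zero, zero_smul, add_zero]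
  · rw [hq] at hf
    exact absurd hf (faceMin_zero_add_smul_lt hS hπ hδ (by exact_mod_cast hn0)
      (fun d => by have := hgap d; omega) hbad).ne

theorem stmt14_general (S M D K : ℕ) (hS : 1 < S) (hM1 : 1 ≤ M) (hMS : M ≤ S - 1)
    (p : Fin K → ℝ) (hp : ∀ k, 0 < p k ∧ p k ≤ 1)
    (δ : Fin D → ℤ) (hδmem : ∀ d, δ d = -1 ∨ δ d = 0 ∨ δ d = 1) (hδ0 : δ ≠ 0)
    (π : (Fin D → ℝ) → ℝ) (hπ : ∀ x, ∃ k : Fin K, π x = p k) :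
    (({q : (Fin D → ℤ) × (Fin D → ℤ) |
        (∀ d, 1 ≤ q.1 d ∧ q.1 d ≤ S) ∧ (∀ d, 1 ≤ q.2 d ∧ q.2 d ≤ S) ∧
        (∀ d, q.1 d ≤ q.2 d) ∧ (∀ d, (M : ℤ) ≤ q.2 d - q.1 d) ∧
        faceMin S D π q.1 q.2 0 > faceMin S D π q.1 q.2 δ}).ncard : ℝ)
      ≤ 2 * D * K * (S : ℝ) ^ (2 * D) / M := by
  obtain ⟨d₀, hd₀⟩ : ∃ d, δ d ≠ 0 := Function.ne_iff.mp hδ0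
  have hS0 : 0 < S := by omega
  have hπ0 : ∀ x, 0 ≤ π x := fun x => by
    obtain ⟨k, hk⟩ := hπ x
    exact hk ▸ (hp k).1.le
  have hrange : Set.range π ⊆ Set.range p :=
    Set.range_subset_iff.2 fun x => (hπ x).imp fun _ hk => hk.symm
  rw [le_div_iff₀ (by exact_mod_cast hM1)]
  norm_cast
  refine (Nat.mul_le_mul_right M (Set.ncard_le_of_separated (deltaAnchor S δ)
    (fun q => faceMin S D π q.1 q.2 0) (exitTime S δ) (N := exitBoundary S δ)
    (V := univ.image p) (L := S) hM1 ?_ ?_ ?_ ?_)).trans ?_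
  · rintro q ⟨h₁, h₂, hle, -, -⟩
    exact deltaAnchor_mem_exitBoundary hδmem hδ0 h₁ h₂ hle
  · rintro q ⟨-, -, -, -, hbad⟩
    obtain ⟨k, hk⟩ := hrange (faceMin_mem_range hS0 ((Set.finite_range p).subset hrange)
      (face_nonempty_of_faceMin_lt hπ0 hbad))
    exact mem_image.2 ⟨k, mem_univ k, hk⟩
  · rintro q ⟨h₁, h₂, -, -, -⟩
    exact (exitTime_lt (hδmem d₀) hd₀ h₁ h₂).le
  · rintro q - q' ⟨-, -, -, hgap, hbad⟩ ha hf ht htM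
    exact eq_of_deltaAnchor_eq hS0 hπ0 hδmem hgap hbad ha hf ht htM
  calc _ = #(exitBoundary S δ) * #(univ.image p) * ((S / M + 1) * M) := by ring
    _ ≤ D * S ^ (2 * D - 1) * K * (2 * S) :=
        Nat.mul_le_mul (Nat.mul_le_mul (by simpa using card_exitBoundary_le (S := S) δ)
          (by simpa using card_image_le (s := univ) (f := p)))
          (Nat.div_add_one_mul_le_two_mul (by omega))
    _ = 2 * D * K * S ^ (2 * D - 1 + 1) := by ring
    _ = 2 * D * K * S ^ (2 * D) := by rw [Nat.sub_add_cancel (by have := d₀.pos; omega)]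

/-- The set of buckets in `B^≥_{S,M}` on which the minimum of `π` over the interior face
strictly exceeds its minimum over the `δ`-face has cardinality at most `2DKS^{2D}/M`. -/
theorem stmt14 (S M D K : ℕ) (hS : 1 < S) (hM1 : 1 ≤ M) (hMS : M ≤ S - 1)
    (hD : 1 ≤ D) (hK : 1 ≤ K)
    (p : Fin K → ℝ) (hp : ∀ k, 0 < p k ∧ p k ≤ 1)
    (hmono : StrictMono p)
    (δ : Fin D → ℤ) (hδmem : ∀ d, δ d = -1 ∨ δ d = 0 ∨ δ d = 1) (hδ0 : δ ≠ 0)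
    (π : (Fin D → ℝ) → ℝ) (hπ : ∀ x, ∃ k : Fin K, π x = p k) (hmeas : Measurable π) :
    (({q : (Fin D → ℤ) × (Fin D → ℤ) |
        (∀ d, 1 ≤ q.1 d ∧ q.1 d ≤ S) ∧ (∀ d, 1 ≤ q.2 d ∧ q.2 d ≤ S) ∧
        (∀ d, q.1 d ≤ q.2 d) ∧ (∀ d, (M : ℤ) ≤ q.2 d - q.1 d) ∧
        faceMin S D π q.1 q.2 0 > faceMin S D π q.1 q.2 δ}).ncard : ℝ)
      ≤ 2 * D * K * (S : ℝ) ^ (2 * D) / M :=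
  stmt14_general S M D K hS hM1 hMS p hp δ hδmem hδ0 π hπ
end
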